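/- arXiv:2311.04603 — 2 statements merged into one kernel-verified Lean document; each statement's English description precedes it below -/
import Mathlib

section
/- Monotonicity of the Wardrop equilibrium in the market size: fix service capacities N₁, …, N_k ∈ ℕ (each ≥ 1) and μ > 0. If 0 < Λ < Λ', λ is a Wardrop equilibrium for total arrival rate Λ and λ' is a Wardrop equilibrium for total arrival rate Λ', then λᵢ < λ'ᵢ for every i = 1, …, k. -/
/-- The Erlang-B blocking probability with `M` servers and offered load `a`:
`B(M, a) = (a^M / M!) / (∑_{j=0}^{M} a^j / j!)`. -/
noncomputable def ErlangB (M : ℕ) (a : ℝ) : ℝ :=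
  (a ^ M / (Nat.factorial M : ℝ)) / (∑ j ∈ Finset.range (M + 1), a ^ j / (Nat.factorial j : ℝ))

/-- A Wardrop equilibrium: positive arrival rates summing to `Λ` that equalize the
Erlang-B blocking probabilities of all coalitions. -/
def IsWardropEquilibrium (k : ℕ) (N : Fin k → ℕ) (μ Λ : ℝ) (lam : Fin k → ℝ) : Prop :=
  (∀ i, 0 < lam i) ∧ (∑ i, lam i = Λ) ∧
    ∀ i j, ErlangB (N i) (lam i / μ) = ErlangB (N j) (lam j / μ)

/-!
Each Erlang-B blocking probability `B(N, ·)` is strictly increasing, since `1 / B(N, a)` is a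
sum of nonnegative multiples of the negative powers `a^{-(N - j)}`. Hence if some coalition had
`λ'ᵢ ≤ λᵢ`, the common blocking level of `λ'` would be at most that of `λ`, which forces
`λ'ⱼ ≤ λⱼ` for every `j`, and summing gives `Λ' ≤ Λ`.
-/

open Finset

lemma inv_erlangB (M : ℕ) {a : ℝ} (ha : a ≠ 0) :
    (ErlangB M a)⁻¹ = ∑ j ∈ range (M + 1), (M.factorial / j.factorial : ℝ) / a ^ (M - j) := by
  rw [ErlangB, inv_div, sum_div]
  refine sum_congr rfl fun j hj => ?_
  rw [← pow_mul_pow_sub a (Nat.lt_succ_iff.mp (mem_range.mp hj))]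
  field_simp

lemma erlangB_pos (M : ℕ) {a : ℝ} (ha : 0 < a) : 0 < ErlangB M a := by
  unfold ErlangB
  positivity

lemma erlangB_strictMonoOn {M : ℕ} (hM : 1 ≤ M) : StrictMonoOn (ErlangB M) (Set.Ioi 0) := by
  intro a (ha : 0 < a) b (hb : 0 < b) hab
  rw [← inv_lt_inv₀ (erlangB_pos M hb) (erlangB_pos M ha), inv_erlangB M ha.ne',
    inv_erlangB M hb.ne']
  apply sum_lt_sum
  · exact fun j _ => div_le_div_of_nonneg_left (by positivity) (by positivity)
      (pow_le_pow_left₀ ha.le hab.le _)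
  · refine ⟨0, by simp, div_lt_div_of_pos_left (by positivity) (by positivity) ?_⟩
    exact pow_lt_pow_left₀ hab ha.le (by omega)

lemma le_of_common_level {ι α β : Type*} [LinearOrder α] [Preorder β] {f : ι → α → β}
    {s : Set α} (hf : ∀ i, StrictMonoOn (f i) s) {x y : ι → α} (hx : ∀ i, x i ∈ s)
    (hy : ∀ i, y i ∈ s) (hx_eq : ∀ i j, f i (x i) = f j (x j))
    (hy_eq : ∀ i j, f i (y i) = f j (y j)) {i : ι} (hi : y i ≤ x i) (j : ι) : y j ≤ x j := by
  rw [← (hf j).le_iff_le (hy j) (hx j), ← hy_eq i j, ← hx_eq i j]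
  exact (hf i).monotoneOn (hy i) (hx i) hi

theorem wardrop_mono_in_market_size_general (k : ℕ) (N : Fin k → ℕ) (hN : ∀ i, 1 ≤ N i)
    (μ : ℝ) (hμ : 0 < μ) (Λ Λ' : ℝ) (hΛΛ' : Λ < Λ')
    (lam lam' : Fin k → ℝ)
    (h : IsWardropEquilibrium k N μ Λ lam)
    (h' : IsWardropEquilibrium k N μ Λ' lam') :
    ∀ i, lam i < lam' i := by
  obtain ⟨hpos, hsum, heq⟩ := h
  obtain ⟨hpos', hsum', heq'⟩ := h'
  have hmono : ∀ i, StrictMonoOn (fun t => ErlangB (N i) (t / μ)) (Set.Ioi 0) := fun i =>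
    (erlangB_strictMonoOn (hN i)).comp ((strictMono_id.div_const hμ).strictMonoOn _)
      fun t (ht : 0 < t) => div_pos ht hμ
  intro i
  by_contra! hle
  have hle_all := le_of_common_level hmono hpos hpos' heq heq' hle
  have : Λ' ≤ Λ := hsum ▸ hsum' ▸ sum_le_sum fun j _ => hle_all j
  linarith

/-- Monotonicity of the Wardrop equilibrium in the market size: fix capacities
`N₁, …, N_k` (each `≥ 1`) and `μ > 0`.  If `0 < Λ < Λ'`, `λ` is a Wardrop equilibrium
for total arrival rate `Λ` and `λ'` one for total arrival rate `Λ'`, then `λᵢ < λ'ᵢ`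
for every `i`. -/
theorem wardrop_mono_in_market_size (k : ℕ) (N : Fin k → ℕ) (hN : ∀ i, 1 ≤ N i)
    (μ : ℝ) (hμ : 0 < μ) (Λ Λ' : ℝ) (hΛ : 0 < Λ) (hΛΛ' : Λ < Λ')
    (lam lam' : Fin k → ℝ)
    (h : IsWardropEquilibrium k N μ Λ lam)
    (h' : IsWardropEquilibrium k N μ Λ' lam') :
    ∀ i, lam i < lam' i :=
  wardrop_mono_in_market_size_general k N hN μ hμ Λ Λ' hΛΛ' lam lam' h h'
end

section
/- Per-server load ordering in a duopoly: fix service capacities N₁ > N₂ ≥ 1 (naturals), Λ > 0 and μ > 0, and let (λ₁, λ₂) be the Wardrop equilibrium for capacities (N₁, N₂). Then λ₁/N₁ > Λ/(N₁ + N₂) > λ₂/N₂, i.e. the larger coalition enjoys a strictly higher offered load per server. -/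
open Finset
open scoped Nat

lemma Nat.cast_descFactorial_eq_prod_range_sub {n k : ℕ} (hk : k ≤ n) :
    (n.descFactorial k : ℝ) = ∏ t ∈ range k, ((n : ℝ) - t) := by
  rw [Nat.descFactorial_eq_prod_range, Nat.cast_prod]
  refine prod_congr rfl fun t ht => ?_
  rw [Nat.cast_sub (by grind)]

noncomputable def erlangBInv (M : ℕ) (a : ℝ) : ℝ :=
  ∑ i ∈ range (M + 1), ∏ t ∈ range i, (((M : ℝ) - t) / a)

lemma erlangBInv_eq (M : ℕ) {a : ℝ} (ha : 0 < a) :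
    erlangBInv M a = (∑ j ∈ range (M + 1), a ^ j / (j ! : ℝ)) * ((M ! : ℝ) / a ^ M) := by
  rw [erlangBInv, sum_mul, ← sum_range_reflect]
  refine sum_congr rfl fun j hj => ?_
  have hjM : j ≤ M := Nat.lt_succ_iff.mp (mem_range.mp hj)
  have hfac : (j ! : ℝ) * M.descFactorial (M - j) = M ! := by
    exact_mod_cast Nat.sub_sub_self hjM ▸ Nat.factorial_mul_descFactorial (Nat.sub_le M j)
  have hpow : a ^ (M - j) * a ^ j = a ^ M := by rw [← pow_add, Nat.sub_add_cancel hjM]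
  rw [Nat.add_sub_cancel, prod_div_distrib, prod_const, card_range,
    ← Nat.cast_descFactorial_eq_prod_range_sub (Nat.sub_le M j), div_mul_div_comm,
    div_eq_div_iff (by positivity) (by positivity)]
  linear_combination a ^ M * hfac - (M ! : ℝ) * hpow

lemma erlangB_eq_inv_erlangBInv (M : ℕ) {a : ℝ} (ha : 0 < a) :
    ErlangB M a = (erlangBInv M a)⁻¹ := by
  rw [erlangBInv_eq M ha, ErlangB, mul_inv, inv_div, div_eq_mul_inv, mul_comm]

lemma erlangBInv_pos (M : ℕ) {a : ℝ} (ha : 0 < a) : 0 < erlangBInv M a := by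
  rw [erlangBInv_eq M ha]
  exact mul_pos (sum_pos (fun j _ => by positivity) nonempty_range_add_one) (by positivity)

lemma prod_range_sub_div_pos {M i : ℕ} (hi : i ≤ M) {a : ℝ} (ha : 0 < a) :
    0 < ∏ t ∈ range i, (((M : ℝ) - t) / a) :=
  prod_pos fun t ht => div_pos (sub_pos.mpr (by exact_mod_cast (mem_range.mp ht).trans_le hi)) ha

lemma sub_div_le_sub_div_of_mul_le_mul {n₁ n₂ a₁ a₂ t : ℝ} (ht₀ : 0 ≤ t) (ht : t ≤ n₂)
    (hn : n₂ ≤ n₁) (ha₁ : 0 < a₁) (ha₂ : 0 < a₂) (hload : a₁ * n₂ ≤ a₂ * n₁) :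
    (n₂ - t) / a₂ ≤ (n₁ - t) / a₁ := by
  rw [div_le_div_iff₀ ha₂ ha₁]
  rcases le_total a₁ a₂ with h | h
  · nlinarith [mul_le_mul_of_nonneg_left h (sub_nonneg.mpr ht)]
  · nlinarith [mul_le_mul_of_nonneg_left h ht₀]

lemma erlangBInv_lt_erlangBInv {N₁ N₂ : ℕ} (hN : N₂ < N₁) {a₁ a₂ : ℝ} (ha₁ : 0 < a₁)
    (ha₂ : 0 < a₂) (hload : a₁ * N₂ ≤ a₂ * N₁) : erlangBInv N₂ a₂ < erlangBInv N₁ a₁ := by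
  have hN' : (N₂ : ℝ) ≤ N₁ := by exact_mod_cast hN.le
  have hterm : ∀ i ∈ range (N₂ + 1), ∏ t ∈ range i, (((N₂ : ℝ) - t) / a₂)
      ≤ ∏ t ∈ range i, (((N₁ : ℝ) - t) / a₁) := by
    intro i hi
    have htN₂ : ∀ t ∈ range i, (t : ℝ) ≤ N₂ := fun t ht => by
      exact_mod_cast ((mem_range.mp ht).trans_le (Nat.lt_succ_iff.mp (mem_range.mp hi))).le
    exact prod_le_prod (fun t ht => div_nonneg (sub_nonneg.mpr (htN₂ t ht)) ha₂.le)
      fun t ht => sub_div_le_sub_div_of_mul_le_mul t.cast_nonneg (htN₂ t ht) hN' ha₁ ha₂ hload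
  calc erlangBInv N₂ a₂
      ≤ ∑ i ∈ range (N₂ + 1), ∏ t ∈ range i, (((N₁ : ℝ) - t) / a₁) := sum_le_sum hterm
    _ < erlangBInv N₁ a₁ :=
        sum_lt_sum_of_subset (range_subset_range.mpr (by omega)) (i := N₁)
          (mem_range.mpr N₁.lt_succ_self) (by simpa using hN.not_ge)
          (prod_range_sub_div_pos le_rfl ha₁)
          fun j hj _ => (prod_range_sub_div_pos (Nat.lt_succ_iff.mp (mem_range.mp hj)) ha₁).le

theorem erlangB_lt_erlangB {N₁ N₂ : ℕ} (hN : N₂ < N₁) {a₁ a₂ : ℝ} (ha₁ : 0 < a₁) (ha₂ : 0 < a₂)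
    (hload : a₁ * N₂ ≤ a₂ * N₁) : ErlangB N₁ a₁ < ErlangB N₂ a₂ := by
  rw [erlangB_eq_inv_erlangBInv N₁ ha₁, erlangB_eq_inv_erlangBInv N₂ ha₂]
  exact inv_strictAnti₀ (erlangBInv_pos N₂ ha₂) (erlangBInv_lt_erlangBInv hN ha₁ ha₂ hload)

theorem wardrop_duopoly_per_server_load_general (N₁ N₂ : ℕ) (hN : N₂ < N₁)
    (Λ μ : ℝ) (hμ : 0 < μ) (lam₁ lam₂ : ℝ)
    (h₁ : 0 < lam₁) (h₂ : 0 < lam₂) (hsum : lam₁ + lam₂ = Λ)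
    (hWE : ErlangB N₁ (lam₁ / μ) = ErlangB N₂ (lam₂ / μ)) :
    Λ / ((N₁ : ℝ) + (N₂ : ℝ)) < lam₁ / (N₁ : ℝ) ∧
      lam₂ / (N₂ : ℝ) < Λ / ((N₁ : ℝ) + (N₂ : ℝ)) := by
  have hN₁ : (0 : ℝ) < N₁ := Nat.cast_pos.mpr (Nat.zero_lt_of_lt hN)
  have hload : lam₂ * N₁ < lam₁ * N₂ := by
    by_contra! h
    refine hWE.not_lt (erlangB_lt_erlangB hN (div_pos h₁ hμ) (div_pos h₂ hμ) ?_)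
    rw [div_mul_eq_mul_div, div_mul_eq_mul_div]
    gcongr
  have hN₂ : (0 : ℝ) < N₂ := pos_of_mul_pos_right ((mul_pos h₂ hN₁).trans hload) h₁.le
  subst hsum
  constructor
  · rw [div_lt_div_iff₀ (by positivity) hN₁]
    linarith
  · rw [div_lt_div_iff₀ hN₂ (by positivity)]
    linarith

/-- Per-server load ordering in a duopoly: fix capacities `N₁ > N₂ ≥ 1`, `Λ > 0` and
`μ > 0`, and let `(λ₁, λ₂)` be the Wardrop equilibrium (positive rates summing to `Λ`
with equal Erlang-B blocking probabilities).  Then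
`λ₁/N₁ > Λ/(N₁ + N₂) > λ₂/N₂`. -/
theorem wardrop_duopoly_per_server_load (N₁ N₂ : ℕ) (hN₂ : 1 ≤ N₂) (hN : N₂ < N₁)
    (Λ μ : ℝ) (hΛ : 0 < Λ) (hμ : 0 < μ) (lam₁ lam₂ : ℝ)
    (h₁ : 0 < lam₁) (h₂ : 0 < lam₂) (hsum : lam₁ + lam₂ = Λ)
    (hWE : ErlangB N₁ (lam₁ / μ) = ErlangB N₂ (lam₂ / μ)) :
    Λ / ((N₁ : ℝ) + (N₂ : ℝ)) < lam₁ / (N₁ : ℝ) ∧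
      lam₂ / (N₂ : ℝ) < Λ / ((N₁ : ℝ) + (N₂ : ℝ)) :=
  wardrop_duopoly_per_server_load_general N₁ N₂ hN Λ μ hμ lam₁ lam₂ h₁ h₂ hsum hWE
end
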